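/- arXiv:math/0602119 — 2 statements merged into one kernel-verified Lean document; each statement's English description precedes it below -/
import Mathlib

section
/- Let Θ = {t ∈ ℂ : 0 ≤ Im t ≤ 1} be the closed horizontal strip, and let w : Θ → ℂ^n be holomorphic (continuous on Θ, holomorphic in the interior) with bounded derivative ‖Dw‖ ≤ C, such that w maps each of the two boundary lines {Im t = 0} and {Im t = 1} into a translate of ℝ^n (i.e., there exist p₀, p₁ ∈ ℂ^n with w({Im t = 0}) ⊆ p₀ + ℝ^n and w({Im t = 1}) ⊆ p₁ + ℝ^n). Then w is affine linear. -/
/-!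
Work coordinatewise. Subtracting the linear function `((Im p₁ - Im p₀) : ℂ) * t` from a coordinate
of `w` leaves a holomorphic function `h` whose imaginary part is the same constant `c` on both
boundary lines, and which grows at most linearly because its derivative is bounded. Since
`‖exp (± i h)‖ = exp (∓ Im h)`, the Phragmén–Lindelöf principle on the strip applied to
`exp (± i h)` gives `Im h = c` throughout. By the Cauchy–Riemann equations `h' = 0`, so `h` is
constant.
-/

open Complex Set Filter Topology Real

theorem PiLp.norm_deriv_apply_le {𝕜 ι : Type*} [NontriviallyNormedField 𝕜] [Fintype ι]
    {p : ENNReal} [Fact (1 ≤ p)] {β : ι → Type*} [∀ i, NormedAddCommGroup (β i)]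
    [∀ i, NormedSpace 𝕜 (β i)] {f : 𝕜 → PiLp p β} {x : 𝕜} (hf : DifferentiableAt 𝕜 f x)
    (i : ι) : ‖deriv (fun t => f t i) x‖ ≤ ‖deriv f x‖ := by
  have hi : HasDerivAt (fun t => f t i) (deriv f x i) x :=
    (PiLp.proj p β i).hasFDerivAt.comp_hasDerivAt x hf.hasDerivAt
  rw [hi.deriv]
  exact PiLp.norm_apply_le _ i

theorem HasDerivAt.eq_zero_of_eventually_im_eq {f : ℂ → ℂ} {d z : ℂ} {c : ℝ}
    (hf : HasDerivAt f d z) (hc : ∀ᶠ w in 𝓝 z, (f w).im = c) : d = 0 := by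
  have hL := imCLM.hasFDerivAt.comp z (hf.hasFDerivAt.restrictScalars ℝ)
  have h0 := hL.unique ((hasFDerivAt_const c z).congr_of_eventuallyEq hc)
  apply Complex.ext
  · simpa using congr($h0 I)
  · simpa using congr($h0 1)

namespace Complex

variable {a b : ℝ}

theorem convex_im_preimage_Ioo : Convex ℝ (im ⁻¹' Ioo a b) :=
  (convex_Ioo a b).linear_preimage imLm

theorem closure_im_preimage_Ioo (hab : a < b) :
    closure (im ⁻¹' Ioo a b) = im ⁻¹' Icc a b := by
  rw [closure_preimage_im, closure_Ioo hab.ne]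

theorem exists_norm_le_add_mul_abs_re_of_norm_deriv_le {E : Type*} [NormedAddCommGroup E]
    [NormedSpace ℂ E] {f : ℂ → E} {K : ℝ} (hab : a < b)
    (hf : DifferentiableOn ℂ f (im ⁻¹' Ioo a b))
    (hK : ∀ z ∈ im ⁻¹' Ioo a b, ‖deriv f z‖ ≤ K) :
    ∃ A, ∀ z ∈ im ⁻¹' Ioo a b, ‖f z‖ ≤ A + K * |z.re| := by
  set z₀ : ℂ := ((a + b) / 2 : ℝ) * I
  have hz₀ : z₀ ∈ im ⁻¹' Ioo a b := by
    simp only [z₀, mem_preimage, mul_I_im, ofReal_re, mem_Ioo]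
    constructor <;> linarith
  have hK₀ : 0 ≤ K := (norm_nonneg _).trans (hK z₀ hz₀)
  refine ⟨‖f z₀‖ + K * (b - a), fun z hz => ?_⟩
  have hdist : ‖z - z₀‖ ≤ |z.re| + (b - a) := by
    refine (norm_le_abs_re_add_abs_im _).trans ?_
    simp only [z₀, sub_re, sub_im, mul_I_re, mul_I_im, ofReal_re, ofReal_im, neg_zero, sub_zero]
    gcongr
    rw [abs_le]
    constructor <;> linarith [hz.1, hz.2]
  have hmvt := convex_im_preimage_Ioo.norm_image_sub_le_of_norm_deriv_le
    (fun w hw => hf.differentiableAt ((isOpen_Ioo.preimage continuous_im).mem_nhds hw))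
    hK hz₀ hz
  calc ‖f z‖ ≤ ‖f z₀‖ + ‖f z - f z₀‖ := norm_le_norm_add_norm_sub' _ _
    _ ≤ ‖f z₀‖ + K * (|z.re| + (b - a)) := by gcongr; exact hmvt.trans (by gcongr)
    _ = ‖f z₀‖ + K * (b - a) + K * |z.re| := by ring

end Complex

namespace PhragmenLindelof

variable {a b : ℝ}

theorem le_im_horizontal_strip_of_linear_growth {f : ℂ → ℂ} {c A B : ℝ} (hab : a < b)
    (hfd : DiffContOnCl ℂ f (im ⁻¹' Ioo a b))
    (hgrowth : ∀ z ∈ im ⁻¹' Ioo a b, ‖f z‖ ≤ A + B * |z.re|)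
    (hle_a : ∀ z : ℂ, z.im = a → c ≤ (f z).im) (hle_b : ∀ z : ℂ, z.im = b → c ≤ (f z).im)
    {z : ℂ} (hza : a ≤ z.im) (hzb : z.im ≤ b) : c ≤ (f z).im := by
  have hnorm : ∀ w, ‖cexp (I * f w)‖ = Real.exp (-(f w).im) := by simp [norm_exp]
  obtain ⟨κ, hκ, hκπ⟩ := exists_between (div_pos pi_pos (sub_pos.2 hab))
  have hO : (fun w => cexp (I * f w))
      =O[comap (_root_.abs ∘ re) atTop ⊓ 𝓟 (im ⁻¹' Ioo a b)]
        fun w => Real.exp (|B| / κ * Real.exp (κ * |w.re|)) := by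
    refine Asymptotics.IsBigO.of_bound (Real.exp A)
      (eventually_inf_principal.2 (Eventually.of_forall fun w hw => ?_))
    have hlin : B * |w.re| ≤ |B| / κ * Real.exp (κ * |w.re|) :=
      calc B * |w.re| ≤ |B| * |w.re| := by gcongr; exact le_abs_self B
        _ = |B| / κ * (κ * |w.re|) := by field_simp
        _ ≤ |B| / κ * Real.exp (κ * |w.re|) := by
            gcongr; linarith [Real.add_one_le_exp (κ * |w.re|)]
    rw [hnorm, Real.norm_of_nonneg (Real.exp_pos _).le, ← Real.exp_add, Real.exp_le_exp]
    linarith [neg_le_abs (f w).im, abs_im_le_norm (f w), hgrowth w hw]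
  have hexp := horizontal_strip (f := fun w => cexp (I * f w)) (C := Real.exp (-c))
    (differentiable_exp.comp_diffContOnCl (hfd.const_smul I)) ⟨κ, hκπ, _, hO⟩
    (fun w hw => by rw [hnorm, Real.exp_le_exp]; linarith [hle_a w hw])
    (fun w hw => by rw [hnorm, Real.exp_le_exp]; linarith [hle_b w hw]) hza hzb
  rw [hnorm, Real.exp_le_exp] at hexp
  linarith

theorem im_eq_horizontal_strip_of_linear_growth {f : ℂ → ℂ} {c A B : ℝ} (hab : a < b)
    (hfd : DiffContOnCl ℂ f (im ⁻¹' Ioo a b))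
    (hgrowth : ∀ z ∈ im ⁻¹' Ioo a b, ‖f z‖ ≤ A + B * |z.re|)
    (heq_a : ∀ z : ℂ, z.im = a → (f z).im = c) (heq_b : ∀ z : ℂ, z.im = b → (f z).im = c)
    {z : ℂ} (hza : a ≤ z.im) (hzb : z.im ≤ b) : (f z).im = c := by
  refine le_antisymm ?_ (le_im_horizontal_strip_of_linear_growth hab hfd hgrowth
    (fun w hw => (heq_a w hw).ge) (fun w hw => (heq_b w hw).ge) hza hzb)
  have hneg := le_im_horizontal_strip_of_linear_growth (f := -f) (c := -c) hab hfd.neg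
    (fun w hw => by simpa using hgrowth w hw) (fun w hw => by simp [heq_a w hw])
    (fun w hw => by simp [heq_b w hw]) hza hzb
  simpa using hneg

theorem exists_const_of_im_eq_horizontal_strip {f : ℂ → ℂ} {c A B : ℝ} (hab : a < b)
    (hfd : DiffContOnCl ℂ f (im ⁻¹' Ioo a b))
    (hgrowth : ∀ z ∈ im ⁻¹' Ioo a b, ‖f z‖ ≤ A + B * |z.re|)
    (heq_a : ∀ z : ℂ, z.im = a → (f z).im = c) (heq_b : ∀ z : ℂ, z.im = b → (f z).im = c) :
    ∃ k, ∀ z ∈ im ⁻¹' Icc a b, f z = k := by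
  have hU : IsOpen (im ⁻¹' Ioo a b) := isOpen_Ioo.preimage continuous_im
  have hderiv : EqOn (deriv f) 0 (im ⁻¹' Ioo a b) := fun z hz =>
    (hfd.differentiableAt hU hz).hasDerivAt.eq_zero_of_eventually_im_eq <|
      eventually_of_mem (hU.mem_nhds hz) fun w hw =>
        im_eq_horizontal_strip_of_linear_growth hab hfd hgrowth heq_a heq_b hw.1.le hw.2.le
  obtain ⟨k, hk⟩ := hU.exists_is_const_of_deriv_eq_zero
    convex_im_preimage_Ioo.isPreconnected hfd.differentiableOn hderiv
  refine ⟨k, ?_⟩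
  rw [← closure_im_preimage_Ioo hab]
  exact EqOn.of_subset_closure hk hfd.continuousOn continuousOn_const subset_closure le_rfl

end PhragmenLindelof

theorem Complex.exists_eq_mul_add_of_im_eq_horizontal_strip {a b K c₀ c₁ : ℝ} {f : ℂ → ℂ}
    (hab : a < b) (hcont : ContinuousOn f (im ⁻¹' Icc a b))
    (hdiff : DifferentiableOn ℂ f (im ⁻¹' Ioo a b))
    (hK : ∀ z ∈ im ⁻¹' Ioo a b, ‖deriv f z‖ ≤ K)
    (heq_a : ∀ z : ℂ, z.im = a → (f z).im = c₀) (heq_b : ∀ z : ℂ, z.im = b → (f z).im = c₁) :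
    ∃ u v : ℂ, ∀ z ∈ im ⁻¹' Icc a b, f z = u * z + v := by
  have hU : IsOpen (im ⁻¹' Ioo a b) := isOpen_Ioo.preimage continuous_im
  set s : ℝ := (c₁ - c₀) / (b - a)
  set g : ℂ → ℂ := fun z => f z - s * z
  have hgd : DifferentiableOn ℂ g (im ⁻¹' Ioo a b) := hdiff.sub (by fun_prop)
  have hg' : ∀ z ∈ im ⁻¹' Ioo a b, ‖deriv g z‖ ≤ K + |s| := fun z hz => by
    have hfz := (hdiff.differentiableAt (hU.mem_nhds hz)).hasDerivAt
    have hgz : HasDerivAt g (deriv f z - s * 1) z :=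
      hfz.fun_sub ((hasDerivAt_id' z).const_mul (s : ℂ))
    rw [hgz.deriv, mul_one]
    exact (norm_sub_le _ _).trans (add_le_add (hK z hz) (norm_real s).le)
  obtain ⟨A, hA⟩ := exists_norm_le_add_mul_abs_re_of_norm_deriv_le hab hgd hg'
  have hgcl : DiffContOnCl ℂ g (im ⁻¹' Ioo a b) :=
    ⟨hgd, by rw [closure_im_preimage_Ioo hab]; exact hcont.sub (by fun_prop)⟩
  obtain ⟨k, hk⟩ := PhragmenLindelof.exists_const_of_im_eq_horizontal_strip
    (c := c₀ - s * a) hab hgcl hA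
    (fun z hz => by simp only [g, sub_im, im_ofReal_mul, heq_a z hz, hz])
    (fun z hz => by
      simp only [g, sub_im, im_ofReal_mul, heq_b z hz, hz, s]
      field_simp [sub_ne_zero.2 hab.ne']
      ring)
  exact ⟨s, k, fun z hz => by rw [← hk z hz]; ring⟩

theorem holomorphic_strip_bounded_deriv_affine_general (n : ℕ)
    (w : ℂ → EuclideanSpace ℂ (Fin n)) (C : ℝ)
    (p₀ p₁ : EuclideanSpace ℂ (Fin n))
    (hcont : ContinuousOn w {t : ℂ | 0 ≤ t.im ∧ t.im ≤ 1})
    (hdiff : ∀ t : ℂ, 0 < t.im → t.im < 1 → DifferentiableAt ℂ w t)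
    (hbd : ∀ t : ℂ, 0 < t.im → t.im < 1 → ‖deriv w t‖ ≤ C)
    (hbd0 : ∀ t : ℂ, t.im = 0 → ∀ i : Fin n, (w t i - p₀ i).im = 0)
    (hbd1 : ∀ t : ℂ, t.im = 1 → ∀ i : Fin n, (w t i - p₁ i).im = 0) :
    ∃ a b : EuclideanSpace ℂ (Fin n), ∀ t : ℂ, 0 ≤ t.im → t.im ≤ 1 → w t = t • a + b := by
  have hcoord : ∀ i, ∃ u v : ℂ, ∀ t ∈ im ⁻¹' Icc 0 1, w t i = u * t + v := fun i =>
    exists_eq_mul_add_of_im_eq_horizontal_strip zero_lt_one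
      ((EuclideanSpace.proj i).continuous.comp_continuousOn hcont)
      (fun t ht => ((EuclideanSpace.proj i : EuclideanSpace ℂ (Fin n) →L[ℂ] ℂ).differentiableAt
        |>.comp t (hdiff t ht.1 ht.2)).differentiableWithinAt)
      (fun t ht => (PiLp.norm_deriv_apply_le (hdiff t ht.1 ht.2) i).trans (hbd t ht.1 ht.2))
      (fun t ht => by simpa [sub_eq_zero] using hbd0 t ht i)
      (fun t ht => by simpa [sub_eq_zero] using hbd1 t ht i)
  choose u v huv using hcoord
  refine ⟨WithLp.toLp 2 u, WithLp.toLp 2 v, fun t ht₀ ht₁ => ?_⟩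
  ext i
  simp [huv i t ⟨ht₀, ht₁⟩, mul_comm]

/-- **Liouville-type theorem on the closed strip `{0 ≤ Im t ≤ 1}`.**
If `w : ℂ → ℂⁿ` is continuous on the closed strip, holomorphic in its interior,
has derivative bounded by `C`, and maps each of the two boundary lines
`{Im t = 0}` and `{Im t = 1}` into a translate of `ℝⁿ` (i.e. `p₀ + ℝⁿ` and
`p₁ + ℝⁿ`, recorded by fixing the coordinatewise imaginary parts), then `w`
is affine linear on the strip. -/
theorem holomorphic_strip_bounded_deriv_affine (n : ℕ)
    (w : ℂ → EuclideanSpace ℂ (Fin n)) (C : ℝ) (hC : 0 < C)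
    (p₀ p₁ : EuclideanSpace ℂ (Fin n))
    (hcont : ContinuousOn w {t : ℂ | 0 ≤ t.im ∧ t.im ≤ 1})
    (hdiff : ∀ t : ℂ, 0 < t.im → t.im < 1 → DifferentiableAt ℂ w t)
    (hbd : ∀ t : ℂ, 0 < t.im → t.im < 1 → ‖deriv w t‖ ≤ C)
    (hbd0 : ∀ t : ℂ, t.im = 0 → ∀ i : Fin n, (w t i - p₀ i).im = 0)
    (hbd1 : ∀ t : ℂ, t.im = 1 → ∀ i : Fin n, (w t i - p₁ i).im = 0) :
    ∃ a b : EuclideanSpace ℂ (Fin n), ∀ t : ℂ, 0 ≤ t.im → t.im ≤ 1 → w t = t • a + b :=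
  holomorphic_strip_bounded_deriv_affine_general n w C p₀ p₁ hcont hdiff hbd hbd0 hbd1
end

section
/- Let u_k : I → ℂ^n be a sequence of differentiable functions on an open interval I around x₀ converging pointwise to a function u₀ which is differentiable at x₀, and let A ∈ ℂ^n with u₀'(x₀) ≠ A. Then there exist c₁ > 0, a subsequence u_{n_k}, and points x_k → x₀ with x_k ≠ x₀, such that ‖(u_{n_k}(x_k) - u_{n_k}(x₀))/(x_k - x₀) - A‖ ≥ c₁ for all k. -/
/-!
Choose points `x_k → x₀`, `x_k ≠ x₀`. For each fixed `k` the slopes of `u_m` between `x₀` and `x_k`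
converge, as `m → ∞`, to the slope of `u₀`, and those slopes of `u₀` converge to `u₀'(x₀) ≠ A`.
A diagonal subsequence `m = n_k` therefore has difference quotients converging to `u₀'(x₀)`,
which eventually stay at distance at least `‖u₀'(x₀) - A‖ / 2` from `A`; dropping finitely many
terms makes this hold for every `k`.
-/

open Filter Topology

theorem exists_strictMono_tendsto_diagonal {α : Type*} [PseudoMetricSpace α]
    {F : ℕ → ℕ → α} {G : ℕ → α} {L : α}
    (hF : ∀ᶠ k in atTop, Tendsto (fun m => F m k) atTop (𝓝 (G k)))
    (hG : Tendsto G atTop (𝓝 L)) :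
    ∃ φ : ℕ → ℕ, StrictMono φ ∧ Tendsto (fun k => F (φ k) k) atTop (𝓝 L) := by
  have hclose : ∀ k, ∀ᶠ m in atTop,
      Tendsto (fun m => F m k) atTop (𝓝 (G k)) → dist (G k) (F m k) < 1 / ((k : ℝ) + 1) := by
    intro k
    by_cases hk : Tendsto (fun m => F m k) atTop (𝓝 (G k))
    · filter_upwards [Metric.tendsto_nhds.1 hk _ Nat.one_div_pos_of_nat] with m hm _
      rwa [dist_comm]
    · exact Eventually.of_forall fun _ hk' => absurd hk' hk
  obtain ⟨φ, hφ, hφclose⟩ := extraction_forall_of_eventually hclose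
  refine ⟨φ, hφ, hG.congr_dist (squeeze_zero' (Eventually.of_forall fun _ => dist_nonneg) ?_
    tendsto_one_div_add_atTop_nhds_zero_nat)⟩
  filter_upwards [hF] with k hk using (hφclose k hk).le

theorem tendsto_slope_of_tendsto_apply {ι E : Type*} [NormedAddCommGroup E] [NormedSpace ℝ E]
    {l : Filter ι} {u : ι → ℝ → E} {u₀ : ℝ → E} {a b : ℝ}
    (ha : Tendsto (fun i => u i a) l (𝓝 (u₀ a))) (hb : Tendsto (fun i => u i b) l (𝓝 (u₀ b))) :
    Tendsto (fun i => slope (u i) a b) l (𝓝 (slope u₀ a b)) := by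
  simpa only [slope_def_module] using (hb.sub ha).const_smul (b - a)⁻¹

theorem diff_quotient_subseq_far_of_deriv_ne_general (n : ℕ) (I : Set ℝ) (hI : IsOpen I)
    (x₀ : ℝ) (hx₀ : x₀ ∈ I) (u : ℕ → ℝ → EuclideanSpace ℂ (Fin n))
    (u₀ : ℝ → EuclideanSpace ℂ (Fin n)) (d A : EuclideanSpace ℂ (Fin n))
    (hconv : ∀ x ∈ I, Tendsto (fun k => u k x) atTop (nhds (u₀ x)))
    (hd : HasDerivAt u₀ d x₀) (hdA : d ≠ A) :
    ∃ c₁ > (0 : ℝ), ∃ φ : ℕ → ℕ, StrictMono φ ∧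
      ∃ x : ℕ → ℝ, (∀ k, x k ∈ I ∧ x k ≠ x₀) ∧ Tendsto x atTop (nhds x₀) ∧
        ∀ k, c₁ ≤ ‖(x k - x₀)⁻¹ • (u (φ k) (x k) - u (φ k) x₀) - A‖ := by
  obtain ⟨x, hx⟩ := exists_seq_tendsto (𝓝[≠] x₀)
  have hx_nhds : Tendsto x atTop (𝓝 x₀) := hx.mono_right nhdsWithin_le_nhds
  have hxI : ∀ᶠ k in atTop, x k ∈ I := hx_nhds.eventually (hI.mem_nhds hx₀)
  have hxne : ∀ᶠ k in atTop, x k ≠ x₀ := hx.eventually self_mem_nhdsWithin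
  obtain ⟨φ, hφ, hslope⟩ := exists_strictMono_tendsto_diagonal
    (F := fun m k => slope (u m) x₀ (x k))
    (hxI.mono fun k hk => tendsto_slope_of_tendsto_apply (hconv x₀ hx₀) (hconv (x k) hk))
    (hd.tendsto_slope.comp hx)
  have hdA_pos : 0 < ‖d - A‖ := norm_pos_iff.2 (sub_ne_zero.2 hdA)
  have hfar : ∀ᶠ k in atTop, ‖d - A‖ / 2 < ‖slope (u (φ k)) x₀ (x k) - A‖ :=
    (hslope.sub_const A).norm.eventually_const_lt (half_lt_self hdA_pos)
  obtain ⟨K, hK⟩ := (hxI.and (hxne.and hfar)).exists_forall_of_atTop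
  refine ⟨‖d - A‖ / 2, half_pos hdA_pos, fun k => φ (k + K),
    hφ.comp (strictMono_id.add_const K), fun k => x (k + K),
    fun k => ⟨(hK _ (by omega)).1, (hK _ (by omega)).2.1⟩,
    (tendsto_add_atTop_iff_nat K).2 hx_nhds, fun k => ?_⟩
  simpa only [slope_def_module] using (hK (k + K) (by omega)).2.2.le

/-- **Lemma mg of the paper (vector-valued case).**
If differentiable functions `u_k : I → ℂⁿ` converge pointwise on an open set `I ∋ x₀`
to `u₀`, `u₀` is differentiable at `x₀`, and `u₀'(x₀) ≠ A`, then there exist `c₁ > 0`,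
a subsequence and points `x_k → x₀`, `x_k ≠ x₀`, such that the difference quotients
`(u_{n_k}(x_k) - u_{n_k}(x₀))/(x_k - x₀)` stay at distance at least `c₁` from `A`. -/
theorem diff_quotient_subseq_far_of_deriv_ne (n : ℕ) (I : Set ℝ) (hI : IsOpen I)
    (x₀ : ℝ) (hx₀ : x₀ ∈ I) (u : ℕ → ℝ → EuclideanSpace ℂ (Fin n))
    (u₀ : ℝ → EuclideanSpace ℂ (Fin n)) (d A : EuclideanSpace ℂ (Fin n))
    (hdiff : ∀ k, ∀ x ∈ I, DifferentiableAt ℝ (u k) x)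
    (hconv : ∀ x ∈ I, Tendsto (fun k => u k x) atTop (nhds (u₀ x)))
    (hd : HasDerivAt u₀ d x₀) (hdA : d ≠ A) :
    ∃ c₁ > (0 : ℝ), ∃ φ : ℕ → ℕ, StrictMono φ ∧
      ∃ x : ℕ → ℝ, (∀ k, x k ∈ I ∧ x k ≠ x₀) ∧ Tendsto x atTop (nhds x₀) ∧
        ∀ k, c₁ ≤ ‖(x k - x₀)⁻¹ • (u (φ k) (x k) - u (φ k) x₀) - A‖ :=
  diff_quotient_subseq_far_of_deriv_ne_general n I hI x₀ hx₀ u u₀ d A hconv hd hdA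
end
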